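/- Let N_0, N_1 ∈ C(H,K) be channels, λ_0, λ_1 ∈ (0,1) with λ_0 + λ_1 = 1, and N := λ_0 N_0 + λ_1 N_1. Then the non-commutative confusability graph satisfies S(N) ⊇ S(N_0) and S(N) ⊇ S(N_1). Consequently, if N lies in the relative interior of C(H,K), then S(N) = B(H). -/

import Mathlib

/-- `G` is a Kraus representation of the channel `N` (including trace preservation). -/
def IsKrausRep {ι κ : Type*} [Fintype ι] [DecidableEq ι] [Fintype κ] [DecidableEq κ]
    (N : Matrix ι ι ℂ →ₗ[ℂ] Matrix κ κ ℂ) {m : ℕ} (G : Fin m → Matrix κ ι ℂ) : Prop :=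
  (∀ a, N a = ∑ j, G j * a * (G j).conjTranspose) ∧
    (∑ j, (G j).conjTranspose * G j = 1)

/-- Kraus characterization of quantum channels (CPTP maps). -/
def IsCPTP {ι κ : Type*} [Fintype ι] [DecidableEq ι] [Fintype κ] [DecidableEq κ]
    (N : Matrix ι ι ℂ →ₗ[ℂ] Matrix κ κ ℂ) : Prop :=
  ∃ (m : ℕ) (G : Fin m → Matrix κ ι ℂ), IsKrausRep N G

/-- The non-commutative confusability graph `S(N) = span{Eⱼ* Eᵢ}` associated to a
Kraus family. -/
noncomputable def confGraph {ι κ : Type*} [Fintype ι] [Fintype κ] {m : ℕ} (G : Fin m → Matrix κ ι ℂ) :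
    Submodule ℂ (Matrix ι ι ℂ) :=
  Submodule.span ℂ {x : Matrix ι ι ℂ | ∃ i j, x = (G j).conjTranspose * G i}

/-- The algebraic relative interior of a set in a complex vector space. -/
def AlgRelInterior {V : Type*} [AddCommGroup V] [Module ℂ V] (s : Set V) (x : V) :
    Prop :=
  x ∈ s ∧ ∀ y ∈ s, ∃ t : ℝ, 1 < t ∧ y + ((t : ℝ) : ℂ) • (x - y) ∈ s

/-!
The span of the Kraus operators of a completely positive map is determined by the map: for
a linear functional `φ` on `B(H, K)`, the quantity `∑ᵢ |φ(Eᵢ)|²` is an explicit expression in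
the values of the map on matrix units, so a functional killing one Kraus family kills every
other. Concatenating `√λ₀ E` and `√λ₁ F` gives a Kraus family of `λ₀ N₀ + λ₁ N₁`, hence its
Kraus span contains those of `N₀` and `N₁`, and `S(N)` is spanned by the products `x* y` with
`x, y` in the Kraus span. A channel in the relative interior is a strict convex combination of
the fully depolarizing channel and another channel; the Kraus operators of the former span
all of `B(H, K)`, so `S(N) = B(H)`.
-/

open Matrix

section Kraus

variable {ι κ σ : Type*} [Fintype ι] [Fintype σ]

def krausMap (E : σ → Matrix κ ι ℂ) : Matrix ι ι ℂ →ₗ[ℂ] Matrix κ κ ℂ where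
  toFun a := ∑ j, E j * a * (E j)ᴴ
  map_add' a b := by simp only [Matrix.mul_add, Matrix.add_mul, Finset.sum_add_distrib]
  map_smul' c a := by
    simp only [Matrix.mul_smul, Matrix.smul_mul, Finset.smul_sum, RingHom.id_apply]

theorem krausMap_apply (E : σ → Matrix κ ι ℂ) (a : Matrix ι ι ℂ) :
    krausMap E a = ∑ j, E j * a * (E j)ᴴ := rfl

theorem krausMap_single_apply [DecidableEq ι] (E : σ → Matrix κ ι ℂ) (k k' : κ) (l l' : ι) :
    krausMap E (single l l' 1) k k' = ∑ j, E j k l * star (E j k' l') := by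
  simp [krausMap_apply, Matrix.sum_apply, Matrix.mul_apply, Matrix.single, ite_and]

variable [Fintype κ] [DecidableEq ι] [DecidableEq κ]

theorem dual_apply_eq_sum (φ : Module.Dual ℂ (Matrix κ ι ℂ)) (M : Matrix κ ι ℂ) :
    φ M = ∑ p : κ × ι, M p.1 p.2 * φ (single p.1 p.2 1) := by
  conv_lhs => rw [matrix_eq_sum_single M]
  simp only [map_sum, Fintype.sum_prod_type]
  refine Finset.sum_congr rfl fun k _ => Finset.sum_congr rfl fun l _ => ?_
  rw [← smul_eq_mul, ← map_smul, smul_single, smul_eq_mul, mul_one]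

theorem sum_dual_mul_star_eq (E : σ → Matrix κ ι ℂ) (φ : Module.Dual ℂ (Matrix κ ι ℂ)) :
    ∑ j, φ (E j) * star (φ (E j)) = ∑ p : κ × ι, ∑ r : κ × ι, φ (single p.1 p.2 1) *
      star (φ (single r.1 r.2 1)) * krausMap E (single p.2 r.2 1) p.1 r.1 := by
  simp_rw [krausMap_single_apply, dual_apply_eq_sum φ (E _), star_sum, Finset.sum_mul_sum,
    Finset.mul_sum]
  rw [Finset.sum_comm]
  refine Finset.sum_congr rfl fun p _ => ?_
  rw [Finset.sum_comm]
  refine Finset.sum_congr rfl fun r _ => Finset.sum_congr rfl fun j _ => ?_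
  simp only [star_mul']
  ring

end Kraus

open scoped ComplexOrder in
theorem span_range_le_of_krausMap_eq {ι κ σ τ : Type*} [Fintype ι] [Fintype κ] [Fintype σ]
    [Fintype τ] [DecidableEq ι] [DecidableEq κ] {E : σ → Matrix κ ι ℂ}
    {F : τ → Matrix κ ι ℂ} (h : krausMap E = krausMap F) :
    Submodule.span ℂ (Set.range E) ≤ Submodule.span ℂ (Set.range F) := by
  refine Submodule.span_le.mpr ?_
  rintro _ ⟨i, rfl⟩
  by_contra hi
  obtain ⟨φ, hφE, hφF⟩ := Submodule.exists_dual_map_eq_bot_of_notMem hi inferInstance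
  have hF : ∀ j, φ (F j) = 0 := fun j =>
    (Submodule.mem_bot ℂ).mp <| hφF ▸ Submodule.mem_map_of_mem (Submodule.subset_span ⟨j, rfl⟩)
  have hE : ∑ j, φ (E j) * star (φ (E j)) = 0 := by
    rw [sum_dual_mul_star_eq, h, ← sum_dual_mul_star_eq]
    simp [hF]
  have hEi := (Finset.sum_eq_zero_iff_of_nonneg fun j _ => mul_star_self_nonneg (φ (E j))).mp hE i
    (Finset.mem_univ _)
  exact hφE ((CStarRing.mul_star_self_eq_zero_iff _).mp hEi)

section ConfGraph

variable {ι κ : Type*} [Fintype ι] [Fintype κ] {m : ℕ} {F : Fin m → Matrix κ ι ℂ}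

theorem conjTranspose_mul_mem_confGraph {x y : Matrix κ ι ℂ}
    (hx : x ∈ Submodule.span ℂ (Set.range F)) (hy : y ∈ Submodule.span ℂ (Set.range F)) :
    xᴴ * y ∈ confGraph F := by
  obtain ⟨a, rfl⟩ := Submodule.mem_span_range_iff_exists_fun ℂ |>.mp hx
  obtain ⟨b, rfl⟩ := Submodule.mem_span_range_iff_exists_fun ℂ |>.mp hy
  simp only [conjTranspose_sum, conjTranspose_smul, Matrix.sum_mul, Matrix.mul_sum,
    Matrix.smul_mul, Matrix.mul_smul]
  have hgen : ∀ i j, (F j)ᴴ * F i ∈ confGraph F := fun i j => Submodule.subset_span ⟨i, j, rfl⟩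
  exact Submodule.sum_mem _ fun i _ => Submodule.smul_mem _ _ <|
    Submodule.sum_mem _ fun j _ => Submodule.smul_mem _ _ <| hgen i j

theorem confGraph_mono {n : ℕ} {E : Fin n → Matrix κ ι ℂ}
    (h : Submodule.span ℂ (Set.range E) ≤ Submodule.span ℂ (Set.range F)) :
    confGraph E ≤ confGraph F := by
  refine Submodule.span_le.mpr ?_
  rintro _ ⟨i, j, rfl⟩
  exact conjTranspose_mul_mem_confGraph (h (Submodule.subset_span ⟨j, rfl⟩))
    (h (Submodule.subset_span ⟨i, rfl⟩))

theorem confGraph_eq_top_of_span_eq_top [DecidableEq ι] [DecidableEq κ] [Nonempty κ]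
    (h : Submodule.span ℂ (Set.range F) = ⊤) : confGraph F = ⊤ := by
  obtain ⟨k⟩ := ‹Nonempty κ›
  refine eq_top_iff.mpr fun a _ => ?_
  rw [matrix_eq_sum_single a]
  refine Submodule.sum_mem _ fun l _ => Submodule.sum_mem _ fun l' _ => ?_
  have hfactor : single l l' (a l l') = (single k l (star (a l l')))ᴴ * single k l' (1 : ℂ) := by
    simp
  rw [hfactor]
  exact conjTranspose_mul_mem_confGraph (h ▸ Submodule.mem_top) (h ▸ Submodule.mem_top)

end ConfGraph

section Convex

variable {ι κ : Type*} [Fintype ι]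

theorem krausMap_append {m n : ℕ} (E : Fin m → Matrix κ ι ℂ) (F : Fin n → Matrix κ ι ℂ) :
    krausMap (Fin.append E F) = krausMap E + krausMap F := by
  ext1 a
  simp [krausMap_apply, Fin.sum_univ_add]

theorem krausMap_sqrt_smul {σ : Type*} [Fintype σ] (E : σ → Matrix κ ι ℂ) {l : ℝ} (hl : 0 ≤ l) :
    krausMap (fun j => (√l : ℂ) • E j) = (l : ℂ) • krausMap E := by
  ext1 a
  simp only [krausMap_apply, LinearMap.smul_apply, Finset.smul_sum, conjTranspose_smul,
    Matrix.smul_mul, Matrix.mul_smul, smul_smul, Complex.star_def, Complex.conj_ofReal,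
    ← Complex.ofReal_mul, Real.mul_self_sqrt hl]

theorem IsKrausRep.krausMap_eq [DecidableEq ι] [Fintype κ] [DecidableEq κ]
    {N : Matrix ι ι ℂ →ₗ[ℂ] Matrix κ κ ℂ} {m : ℕ} {G : Fin m → Matrix κ ι ℂ}
    (h : IsKrausRep N G) : krausMap G = N :=
  LinearMap.ext fun a => (h.1 a).symm

variable [Fintype κ] [DecidableEq ι] [DecidableEq κ]

theorem span_range_le_of_krausMap_eq_smul_add {m n p : ℕ} {E : Fin m → Matrix κ ι ℂ}
    {F : Fin n → Matrix κ ι ℂ} {G : Fin p → Matrix κ ι ℂ} {l₀ l₁ : ℝ} (h₀ : 0 < l₀) (h₁ : 0 ≤ l₁)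
    (hG : krausMap G = (l₀ : ℂ) • krausMap E + (l₁ : ℂ) • krausMap F) :
    Submodule.span ℂ (Set.range E) ≤ Submodule.span ℂ (Set.range G) := by
  set H := Fin.append (fun i => (√l₀ : ℂ) • E i) (fun j => (√l₁ : ℂ) • F j)
  have hH : krausMap H = krausMap G := by
    rw [krausMap_append, krausMap_sqrt_smul E h₀.le, krausMap_sqrt_smul F h₁, hG]
  have hE : ∀ i, E i = (√l₀ : ℂ)⁻¹ • H (Fin.castAdd n i) := fun i => by
    have : (√l₀ : ℂ) ≠ 0 := by exact_mod_cast (Real.sqrt_pos.mpr h₀).ne'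
    simp only [H, Fin.append_left, smul_smul, inv_mul_cancel₀ this, one_smul]
  calc Submodule.span ℂ (Set.range E) ≤ Submodule.span ℂ (Set.range H) := by
        refine Submodule.span_le.mpr ?_
        rintro _ ⟨i, rfl⟩
        exact hE i ▸ Submodule.smul_mem _ _ (Submodule.subset_span ⟨_, rfl⟩)
    _ ≤ Submodule.span ℂ (Set.range G) := span_range_le_of_krausMap_eq hH

end Convex

theorem span_range_le_of_algRelInterior {ι κ : Type*} [Fintype ι] [DecidableEq ι] [Fintype κ]
    [DecidableEq κ] {N N₀ : Matrix ι ι ℂ →ₗ[ℂ] Matrix κ κ ℂ} {m p : ℕ}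
    {E : Fin m → Matrix κ ι ℂ} {G : Fin p → Matrix κ ι ℂ}
    (hN : AlgRelInterior {T | IsCPTP T} N) (hE : IsKrausRep N₀ E) (hG : IsKrausRep N G) :
    Submodule.span ℂ (Set.range E) ≤ Submodule.span ℂ (Set.range G) := by
  obtain ⟨t, ht, n, M, hM⟩ := hN.2 N₀ ⟨m, E, hE⟩
  have ht₀ : (t : ℂ) ≠ 0 := by exact_mod_cast (zero_lt_one.trans ht).ne'
  refine span_range_le_of_krausMap_eq_smul_add (l₀ := 1 - t⁻¹) (l₁ := t⁻¹) (F := M)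
    (sub_pos.mpr (inv_lt_one_of_one_lt₀ ht)) (inv_nonneg.mpr (zero_lt_one.trans ht).le) ?_
  rw [hG.krausMap_eq, hE.krausMap_eq, hM.krausMap_eq]
  push_cast
  rw [smul_add, smul_smul, inv_mul_cancel₀ ht₀, one_smul]
  module

section Depolarizing

variable (ι κ : Type*) [Fintype ι] [Fintype κ]

/-- The operators `|K|^{-1/2} |k⟩⟨l|`, a Kraus family of the fully depolarizing channel
`a ↦ (tr a / dim K) • 1`. -/
noncomputable def depolarizingKraus : Fin (Fintype.card (κ × ι)) → Matrix κ ι ℂ :=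
  fun r => (√(Fintype.card κ) : ℂ)⁻¹ • Matrix.stdBasis ℂ κ ι ((Fintype.equivFin _).symm r)

variable [Nonempty κ]

theorem isKrausRep_depolarizingKraus [DecidableEq ι] [DecidableEq κ] :
    IsKrausRep (krausMap (depolarizingKraus ι κ)) (depolarizingKraus ι κ) := by
  refine ⟨fun a => rfl, ?_⟩
  have hc : (√(Fintype.card κ) : ℂ)⁻¹ * (√(Fintype.card κ) : ℂ)⁻¹ = (Fintype.card κ : ℂ)⁻¹ := by
    rw [← mul_inv, ← Complex.ofReal_mul, Real.mul_self_sqrt (Nat.cast_nonneg _),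
      Complex.ofReal_natCast]
  have hcard : (Fintype.card κ : ℂ) ≠ 0 := Nat.cast_ne_zero.mpr Fintype.card_ne_zero
  simp only [depolarizingKraus, conjTranspose_smul, Matrix.smul_mul, Matrix.mul_smul, smul_smul,
    Complex.star_def, map_inv₀, Complex.conj_ofReal, hc, ← Finset.smul_sum]
  rw [Equiv.sum_comp (Fintype.equivFin (κ × ι)).symm
    (fun p => (Matrix.stdBasis ℂ κ ι p)ᴴ * Matrix.stdBasis ℂ κ ι p), Fintype.sum_prod_type]
  simp only [stdBasis_eq_single, conjTranspose_single, star_one, single_mul_single_same, mul_one,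
    sum_single_one, Finset.sum_const, Finset.card_univ, ← Nat.cast_smul_eq_nsmul ℂ, smul_smul,
    inv_mul_cancel₀ hcard, one_smul]

theorem span_range_depolarizingKraus :
    Submodule.span ℂ (Set.range (depolarizingKraus ι κ)) = ⊤ := by
  rw [eq_top_iff, ← (Matrix.stdBasis ℂ κ ι).span_eq, Submodule.span_le]
  rintro _ ⟨p, rfl⟩
  have hp : Matrix.stdBasis ℂ κ ι p =
      (√(Fintype.card κ) : ℂ) • depolarizingKraus ι κ (Fintype.equivFin _ p) := by
    simp [depolarizingKraus, smul_smul]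
  exact hp ▸ Submodule.smul_mem _ _ (Submodule.subset_span ⟨_, rfl⟩)

end Depolarizing

theorem stmt_13_general {ι κ : Type*} [Fintype ι] [DecidableEq ι] [Fintype κ] [DecidableEq κ]
    [Nonempty κ] :
    (∀ (N₀ N₁ N : Matrix ι ι ℂ →ₗ[ℂ] Matrix κ κ ℂ) (l₀ l₁ : ℝ),
      IsCPTP N₀ → IsCPTP N₁ → l₀ ∈ Set.Ioo (0 : ℝ) 1 → l₁ ∈ Set.Ioo (0 : ℝ) 1 →
      l₀ + l₁ = 1 → N = ((l₀ : ℝ) : ℂ) • N₀ + ((l₁ : ℝ) : ℂ) • N₁ →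
      ∀ (m : ℕ) (G : Fin m → Matrix κ ι ℂ), IsKrausRep N G →
        (∀ (m₀ : ℕ) (E : Fin m₀ → Matrix κ ι ℂ), IsKrausRep N₀ E →
          confGraph E ≤ confGraph G) ∧
        (∀ (m₁ : ℕ) (E : Fin m₁ → Matrix κ ι ℂ), IsKrausRep N₁ E →
          confGraph E ≤ confGraph G)) ∧
    (∀ N : Matrix ι ι ℂ →ₗ[ℂ] Matrix κ κ ℂ,
      AlgRelInterior {T : Matrix ι ι ℂ →ₗ[ℂ] Matrix κ κ ℂ | IsCPTP T} N →
      ∀ (m : ℕ) (G : Fin m → Matrix κ ι ℂ), IsKrausRep N G →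
        confGraph G = ⊤) := by
  refine ⟨fun N₀ N₁ N l₀ l₁ ⟨_, F₀, hF₀⟩ ⟨_, F₁, hF₁⟩ hl₀ hl₁ _ hN m G hG => ⟨?_, ?_⟩, ?_⟩
  · intro _ E hE
    refine confGraph_mono (span_range_le_of_krausMap_eq_smul_add (F := F₁) hl₀.1 hl₁.1.le ?_)
    rw [hG.krausMap_eq, hE.krausMap_eq, hF₁.krausMap_eq, hN]
  · intro _ E hE
    refine confGraph_mono (span_range_le_of_krausMap_eq_smul_add (F := F₀) hl₁.1 hl₀.1.le ?_)
    rw [hG.krausMap_eq, hE.krausMap_eq, hF₀.krausMap_eq, hN, add_comm]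
  · intro N hN m G hG
    refine confGraph_eq_top_of_span_eq_top (top_unique ?_)
    rw [← span_range_depolarizingKraus ι κ]
    exact span_range_le_of_algRelInterior hN (isKrausRep_depolarizingKraus ι κ) hG

/-- if `N = λ₀ N₀ + λ₁ N₁` is a strict convex combination of channels,
then the confusability graph of `N` (computed from any Kraus representation; it is
representation independent) contains those of `N₀` and `N₁`.  Consequently, every
channel in the relative interior of the set of channels has confusability graph equal
to all of `B(H)`. -/
theorem stmt_13 {ι κ : Type*} [Fintype ι] [DecidableEq ι] [Fintype κ] [DecidableEq κ]
    [Nonempty ι] [Nonempty κ] :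
    (∀ (N₀ N₁ N : Matrix ι ι ℂ →ₗ[ℂ] Matrix κ κ ℂ) (l₀ l₁ : ℝ),
      IsCPTP N₀ → IsCPTP N₁ → l₀ ∈ Set.Ioo (0 : ℝ) 1 → l₁ ∈ Set.Ioo (0 : ℝ) 1 →
      l₀ + l₁ = 1 → N = ((l₀ : ℝ) : ℂ) • N₀ + ((l₁ : ℝ) : ℂ) • N₁ →
      ∀ (m : ℕ) (G : Fin m → Matrix κ ι ℂ), IsKrausRep N G →
        (∀ (m₀ : ℕ) (E : Fin m₀ → Matrix κ ι ℂ), IsKrausRep N₀ E →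
          confGraph E ≤ confGraph G) ∧
        (∀ (m₁ : ℕ) (E : Fin m₁ → Matrix κ ι ℂ), IsKrausRep N₁ E →
          confGraph E ≤ confGraph G)) ∧
    (∀ N : Matrix ι ι ℂ →ₗ[ℂ] Matrix κ κ ℂ,
      AlgRelInterior {T : Matrix ι ι ℂ →ₗ[ℂ] Matrix κ κ ℂ | IsCPTP T} N →
      ∀ (m : ℕ) (G : Fin m → Matrix κ ι ℂ), IsKrausRep N G →
        confGraph G = ⊤) :=
  stmt_13_general
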